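/- arXiv:1011.4844 — 5 statements merged into one kernel-verified Lean document; each statement's English description precedes it below -/
import Mathlib

section
/- Let (V,h) be an inner product space of dimension n ≥ 3 and for ψ ∈ Λ²V* let σ(ψ)(x,y,z,w) := 2ψ(x,y)h(z,w) + ψ(x,z)h(y,w) - ψ(y,z)h(x,w) - ψ(x,w)h(y,z) + ψ(y,w)h(x,z). Then σ is injective: if σ(ψ) = 0 then ψ = 0. -/
/-!
Putting `w = z` makes the four mixed terms of `σ(ψ)(x,y,z,w)` cancel in pairs, leaving
`σ(ψ)(x,y,z,z) = 2 ψ(x,y) h(z,z)`. A nonzero symmetric form over a field of characteristic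
`≠ 2` is not totally isotropic, so some `z` has `h(z,z) ≠ 0`, and then `ψ(x,y) = 0` for all
`x, y`.
-/

namespace LinearMap.BilinForm

variable {K M : Type*} [Field K] [Invertible (2 : K)] [AddCommGroup M] [Module K M]
  [Nontrivial M]

theorem eq_zero_of_forall_mul_apply_self_eq_zero {ψ h : LinearMap.BilinForm K M}
    (hsymm : h.IsSymm) (hnd : h.Nondegenerate) (H : ∀ x y z, ψ x y * h z z = 0) : ψ = 0 := by
  obtain ⟨z, hz⟩ := exists_bilinForm_self_ne_zero hnd.ne_zero (isSymm_iff.mp hsymm)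
  ext x y
  exact (mul_eq_zero.mp (H x y z)).resolve_right hz

end LinearMap.BilinForm

theorem stmt10_general (V : Type*) [AddCommGroup V] [Module ℝ V]
    (hn : 3 ≤ Module.finrank ℝ V)
    (h : LinearMap.BilinForm ℝ V) (hsymm : h.IsSymm) (hnd : h.Nondegenerate)
    (ψ : LinearMap.BilinForm ℝ V)
    (σψ : V → V → V → V → ℝ)
    (hσ : ∀ x y z w, σψ x y z w
      = 2 * ψ x y * h z w + ψ x z * h y w - ψ y z * h x w
        - ψ x w * h y z + ψ y w * h x z)
    (hzero : ∀ x y z w, σψ x y z w = 0) :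
    ψ = 0 := by
  have : Nontrivial V := Module.nontrivial_of_finrank_pos (R := ℝ) (by omega)
  refine LinearMap.BilinForm.eq_zero_of_forall_mul_apply_self_eq_zero hsymm hnd fun x y z => ?_
  have hdiag := hzero x y z z
  rw [hσ] at hdiag
  linear_combination hdiag / 2

/-- On an inner product space `(V,h)` of dimension `n ≥ 3`, the map
`σ` from alternating 2-forms to 4-tensors given by
`σ(ψ)(x,y,z,w) = 2ψ(x,y)h(z,w) + ψ(x,z)h(y,w) - ψ(y,z)h(x,w) - ψ(x,w)h(y,z)
+ ψ(y,w)h(x,z)` is injective: if `σ(ψ) = 0` then `ψ = 0`. -/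
theorem stmt10 (V : Type*) [AddCommGroup V] [Module ℝ V] [FiniteDimensional ℝ V]
    (hn : 3 ≤ Module.finrank ℝ V)
    (h : LinearMap.BilinForm ℝ V) (hsymm : h.IsSymm) (hnd : h.Nondegenerate)
    (ψ : LinearMap.BilinForm ℝ V) (hψ : ψ.IsAlt)
    (σψ : V → V → V → V → ℝ)
    (hσ : ∀ x y z w, σψ x y z w
      = 2 * ψ x y * h z w + ψ x z * h y w - ψ y z * h x w
        - ψ x w * h y z + ψ y w * h x z)
    (hzero : ∀ x y z w, σψ x y z w = 0) :
    ψ = 0 :=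
  stmt10_general V hn h hsymm hnd ψ σψ hσ hzero
end

section
/- Let (V,h,J₋) be a pseudo-Hermitian vector space of dimension n ≥ 4, Ω(x,y) = h(x,J₋y) the Kähler form, and σ as in Higa's construction: σ(ψ)(x,y,z,w) := 2ψ(x,y)h(z,w) + ψ(x,z)h(y,w) - ψ(y,z)h(x,w) - ψ(x,w)h(y,z) + ψ(y,w)h(x,z). Then σ(Ω) does not satisfy the Kähler identity: there exist x,y,z,w with σ(Ω)(x,y,z,w) ≠ σ(Ω)(x,y,J₋z,J₋w). -/
/-!
Taking `x = z` and `w = J y`, the defect `σ(Ω)(z,y,z,Jy) - σ(Ω)(z,y,Jz,JJy)` equals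
`2 (h(y,z)² + h(y,Jz)² - h(z,z) h(y,y))`. Fix `z` with `h(z,z) ≠ 0`. If this vanished for every
`y`, polarizing would show that `y ↦ (h(y,z), h(y,Jz))` is injective, so `dim V ≤ 2`.
-/

open LinearMap (BilinForm)
open Module

section

variable {V : Type*} [AddCommGroup V] [Module ℝ V]

def kahlerForm (h : BilinForm ℝ V) (J : V →ₗ[ℝ] V) (x y : V) : ℝ := h x (J y)

def higa (h : BilinForm ℝ V) (ψ : V → V → ℝ) (x y z w : V) : ℝ :=
  2 * ψ x y * h z w + ψ x z * h y w - ψ y z * h x w - ψ x w * h y z + ψ y w * h x z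

section Compatible

variable {h : BilinForm ℝ V} {J : V →ₗ[ℝ] V}

theorem apply_J_eq_neg_apply (hJ2 : ∀ x, J (J x) = -x) (hJh : ∀ x y, h (J x) (J y) = h x y)
    (x y : V) : h x (J y) = -h (J x) y := by
  rw [← hJh x (J y), hJ2, map_neg]

theorem apply_J_self (hsymm : h.IsSymm) (hJ2 : ∀ x, J (J x) = -x)
    (hJh : ∀ x y, h (J x) (J y) = h x y) (x : V) : h x (J x) = 0 := by
  have := apply_J_eq_neg_apply hJ2 hJh x x
  rw [← hsymm.eq x (J x)] at this
  linarith

theorem higa_kahlerForm_sub_higa_kahlerForm_J (hsymm : h.IsSymm) (hJ2 : ∀ x, J (J x) = -x)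
    (hJh : ∀ x y, h (J x) (J y) = h x y) (y z : V) :
    higa h (kahlerForm h J) z y z (J y) - higa h (kahlerForm h J) z y (J z) (J (J y))
      = 2 * (h y z ^ 2 + h y (J z) ^ 2 - h z z * h y y) := by
  simp only [higa, kahlerForm, hJ2, map_neg, apply_J_self hsymm hJ2 hJh,
    apply_J_eq_neg_apply hJ2 hJh z y, hsymm.eq z y, hsymm.eq (J z) y]
  ring

end Compatible

theorem exists_mul_apply_self_ne_sq_add_sq [FiniteDimensional ℝ V] {h : BilinForm ℝ V}
    (hsymm : h.IsSymm) (hnd : h.Nondegenerate) (hn : 2 < finrank ℝ V) (u v : V) {c : ℝ}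
    (hc : c ≠ 0) : ∃ y, c * h y y ≠ h y u ^ 2 + h y v ^ 2 := by
  by_contra! hq
  have hinj : Function.Injective ((h.flip u).prod (h.flip v)) := by
    rw [← LinearMap.ker_eq_bot, LinearMap.ker_eq_bot']
    intro y hy
    obtain ⟨hyu, hyv⟩ : h y u = 0 ∧ h y v = 0 := by simpa using hy
    refine hnd.1 y fun w ↦ ?_
    have hpol : c * (2 * h y w) = 0 := by
      have hyw := hq (y + w)
      simp only [map_add, LinearMap.add_apply, hyu, hyv, hsymm.eq w y] at hyw
      linear_combination hyw - hq y - hq w - h y u * hyu - h y v * hyv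
    simpa [hc] using hpol
  have := LinearMap.finrank_le_finrank_of_injective hinj
  simp only [finrank_prod, finrank_self] at this
  omega

end

/-- Let `(V,h,J)` be a pseudo-Hermitian vector space of dimension
`n ≥ 4`, with Kähler form `Ω(x,y) = h(x,Jy)`, and `σ` Higa's map.  Then `σ(Ω)` does
not satisfy the Kähler identity: there exist `x,y,z,w` with
`σ(Ω)(x,y,z,w) ≠ σ(Ω)(x,y,Jz,Jw)`. -/
theorem stmt14 (V : Type*) [AddCommGroup V] [Module ℝ V] [FiniteDimensional ℝ V]
    (hn : 4 ≤ Module.finrank ℝ V)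
    (h : LinearMap.BilinForm ℝ V) (hsymm : h.IsSymm) (hnd : h.Nondegenerate)
    (J : V →ₗ[ℝ] V) (hJ2 : ∀ x, J (J x) = -x)
    (hJh : ∀ x y, h (J x) (J y) = h x y)
    (Ω : V → V → ℝ) (hΩ : ∀ x y, Ω x y = h x (J y))
    (σΩ : V → V → V → V → ℝ)
    (hσ : ∀ x y z w, σΩ x y z w
      = 2 * Ω x y * h z w + Ω x z * h y w - Ω y z * h x w
        - Ω x w * h y z + Ω y w * h x z) :
    ∃ x y z w, σΩ x y z w ≠ σΩ x y (J z) (J w) := by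
  have hσΩ : σΩ = higa h (kahlerForm h J) := by
    have : Ω = kahlerForm h J := funext₂ hΩ
    subst this
    funext x y z w
    exact hσ x y z w
  have : Nontrivial V := nontrivial_of_finrank_pos (R := ℝ) (by omega)
  obtain ⟨z, hz⟩ :=
    BilinForm.exists_bilinForm_self_ne_zero hnd.ne_zero (BilinForm.isSymm_iff.mp hsymm)
  obtain ⟨y, hy⟩ := exists_mul_apply_self_ne_sq_add_sq hsymm hnd (by omega) z (J z) hz
  refine ⟨z, y, z, J y, sub_ne_zero.mp ?_⟩
  rw [hσΩ, higa_kahlerForm_sub_higa_kahlerForm_J hsymm hJ2 hJh]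
  intro h0
  exact hy (by linarith)
end

section
/- Let (V,h,J₋) be a pseudo-Hermitian vector space and let ψ ∈ Λ²V* satisfy ψ(J₋x,J₋y) = -ψ(x,y). Then the tensor Ψ(ψ) defined by Ψ(ψ)(x,y,z,w) := 2h(x,J₋y)ψ(z,J₋w) + 2h(z,J₋w)ψ(x,J₋y) + h(x,J₋z)ψ(y,J₋w) + h(y,J₋w)ψ(x,J₋z) - h(x,J₋w)ψ(y,J₋z) - h(y,J₋z)ψ(x,J₋w) satisfies the first Bianchi identity Ψ(ψ)(x,y,z,w) + Ψ(ψ)(y,z,x,w) + Ψ(ψ)(z,x,y,w) = 0. -/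
/-! Writing `ω x y = h x (J y)` and `φ x y = ψ x (J y)`, the tensor `Ψ(ψ)` is built from the two
forms `ω` and `φ` alone, and both are skew: `h` is symmetric and `J`-invariant, `ψ` is alternating
and `J`-anti-invariant, and `J² = -1`. For any two skew forms the cyclic sum of the tensor cancels
term by term. -/

namespace LinearMap.BilinForm

variable {V : Type*} [AddCommGroup V] [Module ℝ V] {B : LinearMap.BilinForm ℝ V} {J : V →ₗ[ℝ] V}

theorem IsSymm.apply_J_eq_neg (hB : B.IsSymm) (hJ2 : ∀ x : V, J (J x) = -x)
    (hBJ : ∀ x y : V, B (J x) (J y) = B x y) (x y : V) : B x (J y) = -B y (J x) := by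
  rw [← hBJ x (J y), hJ2, map_neg, hB.eq]

theorem IsAlt.apply_J_eq_neg (hB : B.IsAlt) (hJ2 : ∀ x : V, J (J x) = -x)
    (hBJ : ∀ x y : V, B (J x) (J y) = -B x y) (x y : V) : B x (J y) = -B y (J x) := by
  have := hBJ x (J y)
  rw [hJ2, map_neg, neg_inj] at this
  rw [← this, hB.neg_eq]

end LinearMap.BilinForm

section TricerriVanhecke

variable {V : Type*}

def tricerriVanheckeTensor (ω φ : V → V → ℝ) (x y z w : V) : ℝ :=
  2 * ω x y * φ z w + 2 * ω z w * φ x y + ω x z * φ y w + ω y w * φ x z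
    - ω x w * φ y z - ω y z * φ x w

theorem tricerriVanheckeTensor_cyclic_sum {ω φ : V → V → ℝ}
    (hω : ∀ x y, ω x y = -ω y x) (hφ : ∀ x y, φ x y = -φ y x) (x y z w : V) :
    tricerriVanheckeTensor ω φ x y z w + tricerriVanheckeTensor ω φ y z x w
      + tricerriVanheckeTensor ω φ z x y w = 0 := by
  simp only [tricerriVanheckeTensor]
  rw [hω y x, hω z x, hω z y, hφ y x, hφ z x, hφ z y]
  ring

end TricerriVanhecke

theorem stmt16_general (V : Type*) [AddCommGroup V] [Module ℝ V]
    (h : LinearMap.BilinForm ℝ V) (hsymm : h.IsSymm)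
    (J : V →ₗ[ℝ] V) (hJ2 : ∀ x, J (J x) = -x)
    (hJh : ∀ x y, h (J x) (J y) = h x y)
    (ψ : LinearMap.BilinForm ℝ V) (hψ : ψ.IsAlt)
    (hψJ : ∀ x y, ψ (J x) (J y) = -ψ x y)
    (Ψψ : V → V → V → V → ℝ)
    (hΨ : ∀ x y z w, Ψψ x y z w
      = 2 * h x (J y) * ψ z (J w) + 2 * h z (J w) * ψ x (J y)
        + h x (J z) * ψ y (J w) + h y (J w) * ψ x (J z)
        - h x (J w) * ψ y (J z) - h y (J z) * ψ x (J w)) :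
    ∀ x y z w, Ψψ x y z w + Ψψ y z x w + Ψψ z x y w = 0 := by
  have hΨ_eq : Ψψ = tricerriVanheckeTensor (fun x y => h x (J y)) (fun x y => ψ x (J y)) := by
    funext x y z w
    exact hΨ x y z w
  rw [hΨ_eq]
  exact tricerriVanheckeTensor_cyclic_sum (hsymm.apply_J_eq_neg hJ2 hJh)
    (hψ.apply_J_eq_neg hJ2 hψJ)

/-- In the setting of the Tricerri–Vanhecke construction (pseudo-
Hermitian `(V,h,J)`, `ψ` alternating with `ψ(Jx,Jy) = -ψ(x,y)`), the tensor `Ψ(ψ)`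
satisfies the first Bianchi identity. -/
theorem stmt16 (V : Type*) [AddCommGroup V] [Module ℝ V] [FiniteDimensional ℝ V]
    (h : LinearMap.BilinForm ℝ V) (hsymm : h.IsSymm) (hnd : h.Nondegenerate)
    (J : V →ₗ[ℝ] V) (hJ2 : ∀ x, J (J x) = -x)
    (hJh : ∀ x y, h (J x) (J y) = h x y)
    (ψ : LinearMap.BilinForm ℝ V) (hψ : ψ.IsAlt)
    (hψJ : ∀ x y, ψ (J x) (J y) = -ψ x y)
    (Ψψ : V → V → V → V → ℝ)
    (hΨ : ∀ x y z w, Ψψ x y z w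
      = 2 * h x (J y) * ψ z (J w) + 2 * h z (J w) * ψ x (J y)
        + h x (J z) * ψ y (J w) + h y (J w) * ψ x (J z)
        - h x (J w) * ψ y (J z) - h y (J z) * ψ x (J w)) :
    ∀ x y z w, Ψψ x y z w + Ψψ y z x w + Ψψ z x y w = 0 :=
  stmt16_general V h hsymm J hJ2 hJh ψ hψ hψJ Ψψ hΨ
end

section
/- Let (V,h,J₋) be a pseudo-Hermitian vector space of dimension n ≥ 6 with a basis where h is the standard (possibly indefinite) diagonal form and J₋e_{2i-1}=e_{2i}. Let ψ₀ := e¹⊗e² - e²⊗e¹ + δ(e³⊗e⁴ - e⁴⊗e³) with δ chosen so that ψ₀ is orthogonal to the Kähler form Ω, and let σ be as in Higa's construction. Then σ(ψ₀)(e₅,e₁,e₂,e₅) = -h₅₅ ≠ 0 while σ(ψ₀)(e₅,e₁,J₋e₂,J₋e₅) = 0; in particular σ(ψ₀) fails the Kähler identity. -/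
/-- Higa's `σ(ψ)` for the metric `h`. -/
def higaSigma {V : Type*} (ψ h : V → V → ℝ) (x y z w : V) : ℝ :=
  2 * ψ x y * h z w + ψ x z * h y w - ψ y z * h x w - ψ x w * h y z + ψ y w * h x z

theorem higaSigma_of_orthogonal {V : Type*} (ψ h : V → V → ℝ) {x y z w : V}
    (hzw : h z w = 0) (hyw : h y w = 0) (hxz : h x z = 0) :
    higaSigma ψ h x y z w = -(ψ y z * h x w) - ψ x w * h y z := by
  simp only [higaSigma, hzw, hyw, hxz]
  ring

theorem stmt17 (V : Type*) [AddCommGroup V] [Module ℝ V]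
    (n : ℕ) (hn : 6 ≤ n)
    (h : LinearMap.BilinForm ℝ V)
    (b : Module.Basis (Fin n) ℝ V)
    (hdiag : ∀ i j, i ≠ j → h (b i) (b j) = 0)
    (hunit : ∀ i, h (b i) (b i) = 1 ∨ h (b i) (b i) = -1)
    (J : V →ₗ[ℝ] V)
    (hJb : ∀ (k : ℕ) (hk : 2 * k + 1 < n),
      J (b ⟨2 * k, by omega⟩) = b ⟨2 * k + 1, hk⟩ ∧
      J (b ⟨2 * k + 1, hk⟩) = -(b ⟨2 * k, by omega⟩))
    (δ : ℝ) (ψ₀ : V → V → ℝ)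
    (hψ₀ : ∀ x y, ψ₀ x y
      = b.coord ⟨0, by omega⟩ x * b.coord ⟨1, by omega⟩ y
        - b.coord ⟨1, by omega⟩ x * b.coord ⟨0, by omega⟩ y
        + δ * (b.coord ⟨2, by omega⟩ x * b.coord ⟨3, by omega⟩ y
          - b.coord ⟨3, by omega⟩ x * b.coord ⟨2, by omega⟩ y))
    (σψ : V → V → V → V → ℝ)
    (hσ : ∀ x y z w, σψ x y z w
      = 2 * ψ₀ x y * h z w + ψ₀ x z * h y w - ψ₀ y z * h x w
        - ψ₀ x w * h y z + ψ₀ y w * h x z) :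
    σψ (b ⟨4, by omega⟩) (b ⟨0, by omega⟩) (b ⟨1, by omega⟩) (b ⟨4, by omega⟩)
        = -(h (b ⟨4, by omega⟩) (b ⟨4, by omega⟩)) ∧
    h (b ⟨4, by omega⟩) (b ⟨4, by omega⟩) ≠ 0 ∧
    σψ (b ⟨4, by omega⟩) (b ⟨0, by omega⟩) (J (b ⟨1, by omega⟩))
        (J (b ⟨4, by omega⟩)) = 0 ∧
    ¬(∀ x y z w, σψ x y z w = σψ x y (J z) (J w)) := by
  have hσ' : σψ = higaSigma ψ₀ (fun x y => h x y) := by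
    funext x y z w; exact hσ x y z w
  have hψ01 : ψ₀ (b ⟨0, by omega⟩) (b ⟨1, by omega⟩) = 1 := by
    simp [hψ₀]
  have hψ45 : ψ₀ (b ⟨4, by omega⟩) (b ⟨5, by omega⟩) = 0 := by
    simp [hψ₀]
  have h44 : h (b ⟨4, by omega⟩) (b ⟨4, by omega⟩) ≠ 0 := by
    rcases hunit ⟨4, by omega⟩ with h1 | h1 <;> simp [h1]
  have hfirst : σψ (b ⟨4, by omega⟩) (b ⟨0, by omega⟩) (b ⟨1, by omega⟩) (b ⟨4, by omega⟩)
      = -(h (b ⟨4, by omega⟩) (b ⟨4, by omega⟩)) := by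
    rw [hσ', higaSigma_of_orthogonal _ _ (hdiag _ _ (by simp)) (hdiag _ _ (by simp))
      (hdiag _ _ (by simp)), hψ01, hdiag ⟨0, by omega⟩ ⟨1, by omega⟩ (by simp)]
    ring
  have hsecond : σψ (b ⟨4, by omega⟩) (b ⟨0, by omega⟩) (J (b ⟨1, by omega⟩))
      (J (b ⟨4, by omega⟩)) = 0 := by
    rw [(hJb 0 (by omega)).2, (hJb 2 (by omega)).1, hσ',
      higaSigma_of_orthogonal _ _ (by simp [hdiag]) (hdiag _ _ (by simp)) (by simp [hdiag]),
      hψ45, hdiag ⟨4, by omega⟩ ⟨5, by omega⟩ (by simp)]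
    ring
  refine ⟨hfirst, h44, hsecond, fun hKahler => h44 ?_⟩
  have := hKahler (b ⟨4, by omega⟩) (b ⟨0, by omega⟩) (b ⟨1, by omega⟩) (b ⟨4, by omega⟩)
  rw [hfirst, hsecond] at this
  linarith
end

section
/- On ℝⁿ (n ≥ 4) with the flat Euclidean metric, standard complex structure J₋ (J₋∂_{x_{2i-1}}=∂_{x_{2i}}, J₋∂_{x_{2i}}=-∂_{x_{2i-1}}), and rotation family Θ(x₁) rotating the (∂_{x₁},∂_{x₃})-plane by angle θ(x₁) with θ(0)=0 and θ'(0) ≠ 0, the twisted almost complex structure J^Θ := Θ⁻¹J₋Θ has nonvanishing Nijenhuis tensor at the origin: N(∂_{x₁},∂_{x₃})(0) = θ'(0)∂_{x₁} ≠ 0. In particular J^Θ is a non-integrable almost complex structure compatible with the flat metric. -/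
noncomputable section

/-- The standard complex structure on `ℝⁿ` (0-indexed pairs):
`J ∂_{2k} = ∂_{2k+1}`, `J ∂_{2k+1} = -∂_{2k}`. -/
def Jstd (n : ℕ) (v : Fin n → ℝ) : Fin n → ℝ :=
  fun i => if (i : ℕ) % 2 = 0 then
    -(v ⟨((i : ℕ) + 1) % n, Nat.mod_lt _ i.pos⟩)
  else v ⟨(i : ℕ) - 1, lt_of_le_of_lt (Nat.sub_le _ _) i.isLt⟩

/-- Rotation by angle `t` in the `(∂_0, ∂_2)`-plane (1-indexed: the `(∂_{x₁},∂_{x₃})`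
plane), fixing the other coordinate directions. -/
def rotMap (n : ℕ) (hn : 4 ≤ n) (t : ℝ) (v : Fin n → ℝ) : Fin n → ℝ :=
  fun i =>
    if (i : ℕ) = 0 then Real.cos t * v ⟨0, by omega⟩ - Real.sin t * v ⟨2, by omega⟩
    else if (i : ℕ) = 2 then
      Real.sin t * v ⟨0, by omega⟩ + Real.cos t * v ⟨2, by omega⟩
    else v i

/-- The twisted almost complex structure `J^Θ = Θ⁻¹ J Θ`, `Θ = Θ(θ(x₁))`. -/
def JTheta (n : ℕ) (hn : 4 ≤ n) (θ : ℝ → ℝ) (p : Fin n → ℝ)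
    (v : Fin n → ℝ) : Fin n → ℝ :=
  rotMap n hn (-(θ (p ⟨0, by omega⟩))) (Jstd n (rotMap n hn (θ (p ⟨0, by omega⟩)) v))

/-- `J^Θ` applied to a vector field. -/
def JThetaField (n : ℕ) (hn : 4 ≤ n) (θ : ℝ → ℝ)
    (Xf : (Fin n → ℝ) → (Fin n → ℝ)) : (Fin n → ℝ) → (Fin n → ℝ) :=
  fun p => JTheta n hn θ p (Xf p)

/-- Lie bracket of vector fields on `ℝⁿ`. -/
def vfBracket (n : ℕ) (Xf Yf : (Fin n → ℝ) → (Fin n → ℝ)) :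
    (Fin n → ℝ) → (Fin n → ℝ) :=
  fun p => fderiv ℝ Yf p (Xf p) - fderiv ℝ Xf p (Yf p)

/-- Nijenhuis tensor `N(x,y) = [x,y] + J[Jx,y] + J[x,Jy] - [Jx,Jy]` of `J^Θ`. -/
def nijenhuis (n : ℕ) (hn : 4 ≤ n) (θ : ℝ → ℝ)
    (Xf Yf : (Fin n → ℝ) → (Fin n → ℝ)) : (Fin n → ℝ) → (Fin n → ℝ) :=
  vfBracket n Xf Yf
    + JThetaField n hn θ (vfBracket n (JThetaField n hn θ Xf) Yf)
    + JThetaField n hn θ (vfBracket n Xf (JThetaField n hn θ Yf))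
    - vfBracket n (JThetaField n hn θ Xf) (JThetaField n hn θ Yf)

variable {n : ℕ}



lemma rot_rot (hn : 4 ≤ n) (t : ℝ) (v : Fin n → ℝ) :
    rotMap n hn t (rotMap n hn (-t) v) = v := by
  funext i
  by_cases h0 : (i : ℕ) = 0
  · have hi : i = ⟨0, by omega⟩ := Fin.ext h0
    rw [hi]
    simp [rotMap, Real.cos_neg, Real.sin_neg]
    linear_combination (v ⟨0, by omega⟩) * (Real.sin_sq_add_cos_sq t)
  · by_cases h2 : (i : ℕ) = 2
    · have hi : i = ⟨2, by omega⟩ := Fin.ext h2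
      rw [hi]
      simp [rotMap, Real.cos_neg, Real.sin_neg]
      linear_combination (v ⟨2, by omega⟩) * (Real.sin_sq_add_cos_sq t)
    · simp [rotMap, h0, h2]

lemma rot_neg_vec (hn : 4 ≤ n) (t : ℝ) (v : Fin n → ℝ) :
    rotMap n hn t (-v) = -(rotMap n hn t v) := by
  funext i
  simp only [rotMap, Pi.neg_apply]
  split_ifs <;> ring

lemma Jstd_Jstd (hev : Even n) (v : Fin n → ℝ) : Jstd n (Jstd n v) = -v := by
  have hn2 : n % 2 = 0 := Nat.even_iff.mp hev
  funext i
  have hilt : (i : ℕ) < n := i.isLt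
  by_cases h : (i : ℕ) % 2 = 0
  · have hlt : (i : ℕ) + 1 < n := by omega
    have h1 : ((i : ℕ) + 1) % n = (i : ℕ) + 1 := Nat.mod_eq_of_lt hlt
    simp only [Jstd, h, if_true, Pi.neg_apply]
    have h2 : ¬(((i:ℕ) + 1) % n % 2 = 0) := by rw [h1]; omega
    rw [if_neg h2]
    simp only [h1, Nat.add_sub_cancel, Fin.eta]
  · have h1 : (i : ℕ) % 2 = 1 := by omega
    simp only [Jstd, Pi.neg_apply]
    rw [if_neg h]
    have h2 : ((i:ℕ) - 1) % 2 = 0 := by omega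
    rw [if_pos h2]
    have h3 : ((i:ℕ) - 1 + 1) % n = (i : ℕ) := by
      have : (i:ℕ) - 1 + 1 = (i:ℕ) := by omega
      rw [this, Nat.mod_eq_of_lt hilt]
    simp only [h3, Fin.eta]



lemma rot02 (hn : 4 ≤ n) (t a b : ℝ) :
    rotMap n hn t (fun i : Fin n => if (i : ℕ) = 0 then a else if (i : ℕ) = 2 then b else 0)
      = fun i : Fin n => if (i : ℕ) = 0 then Real.cos t * a - Real.sin t * b
          else if (i : ℕ) = 2 then Real.sin t * a + Real.cos t * b else 0 := by
  funext i
  simp only [rotMap]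
  split_ifs <;> simp_all

lemma rot13 (hn : 4 ≤ n) (t a b : ℝ) :
    rotMap n hn t (fun i : Fin n => if (i : ℕ) = 1 then a else if (i : ℕ) = 3 then b else 0)
      = fun i : Fin n => if (i : ℕ) = 1 then a else if (i : ℕ) = 3 then b else 0 := by
  funext i
  simp only [rotMap]
  split_ifs <;> simp_all

lemma jstd02 (hev : Even n) (a b : ℝ) :
    Jstd n (fun i : Fin n => if (i : ℕ) = 0 then a else if (i : ℕ) = 2 then b else 0)
      = fun i : Fin n => if (i : ℕ) = 1 then a else if (i : ℕ) = 3 then b else 0 := by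
  have hn2 : n % 2 = 0 := Nat.even_iff.mp hev
  funext i
  have hilt : (i : ℕ) < n := i.isLt
  by_cases h : (i : ℕ) % 2 = 0
  · have hlt : (i : ℕ) + 1 < n := by omega
    have h1 : ((i : ℕ) + 1) % n = (i : ℕ) + 1 := Nat.mod_eq_of_lt hlt
    have h2 : ¬((i:ℕ) + 1 = 0) := by omega
    have h3 : ¬((i:ℕ) + 1 = 2) := by omega
    have h4 : ¬((i:ℕ) = 1) := by omega
    have h5 : ¬((i:ℕ) = 3) := by omega
    simp [Jstd, h, h1, h2, h3, h4, h5]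
  · by_cases h1 : (i : ℕ) = 1
    · simp [Jstd, h, h1]
    · by_cases h3 : (i : ℕ) = 3
      · simp [Jstd, h, h3]
      · have h4 : ¬((i:ℕ) - 1 = 0) := by omega
        have h5 : ¬((i:ℕ) - 1 = 2) := by omega
        simp [Jstd, h, h1, h3, h4, h5]

lemma jstd13 (hn : 4 ≤ n) (hev : Even n) (a b : ℝ) :
    Jstd n (fun i : Fin n => if (i : ℕ) = 1 then a else if (i : ℕ) = 3 then b else 0)
      = fun i : Fin n => if (i : ℕ) = 0 then -a else if (i : ℕ) = 2 then -b else 0 := by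
  have hn2 : n % 2 = 0 := Nat.even_iff.mp hev
  funext i
  have hilt : (i : ℕ) < n := i.isLt
  by_cases h : (i : ℕ) % 2 = 0
  · have hlt : (i : ℕ) + 1 < n := by omega
    have h1 : ((i : ℕ) + 1) % n = (i : ℕ) + 1 := Nat.mod_eq_of_lt hlt
    have e1 : 1 % n = 1 := Nat.mod_eq_of_lt (by omega)
    have e3 : 3 % n = 3 := Nat.mod_eq_of_lt (by omega)
    by_cases h0 : (i : ℕ) = 0
    · simp [Jstd, h, h1, h0, e1, e3]
    · by_cases h2 : (i : ℕ) = 2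
      · simp [Jstd, h, h1, h2, e1, e3]
      · have h4 : ¬((i:ℕ) + 1 = 1) := by omega
        have h5 : ¬((i:ℕ) + 1 = 3) := by omega
        simp [Jstd, h, h1, h0, h2, h4, h5]
  · have h4 : ¬((i:ℕ) - 1 = 1) := by omega
    have h5 : ¬((i:ℕ) - 1 = 3) := by omega
    have h0 : ¬((i:ℕ) = 0) := by omega
    have h2 : ¬((i:ℕ) = 2) := by omega
    simp [Jstd, h, h0, h2, h4, h5]

lemma JT02 (hn : 4 ≤ n) (hev : Even n) (θ : ℝ → ℝ) (p : Fin n → ℝ) (a b : ℝ) :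
    JTheta n hn θ p (fun i : Fin n => if (i : ℕ) = 0 then a else if (i : ℕ) = 2 then b else 0)
      = fun i : Fin n => if (i : ℕ) = 1 then Real.cos (θ (p ⟨0, by omega⟩)) * a
            - Real.sin (θ (p ⟨0, by omega⟩)) * b
          else if (i : ℕ) = 3 then Real.sin (θ (p ⟨0, by omega⟩)) * a
            + Real.cos (θ (p ⟨0, by omega⟩)) * b else 0 := by
  simp only [JTheta]
  rw [rot02, jstd02 hev, rot13]

lemma JT13 (hn : 4 ≤ n) (hev : Even n) (θ : ℝ → ℝ) (p : Fin n → ℝ) (a b : ℝ) :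
    JTheta n hn θ p (fun i : Fin n => if (i : ℕ) = 1 then a else if (i : ℕ) = 3 then b else 0)
      = fun i : Fin n => if (i : ℕ) = 0 then
            Real.cos (-(θ (p ⟨0, by omega⟩))) * (-a) - Real.sin (-(θ (p ⟨0, by omega⟩))) * (-b)
          else if (i : ℕ) = 2 then
            Real.sin (-(θ (p ⟨0, by omega⟩))) * (-a) + Real.cos (-(θ (p ⟨0, by omega⟩))) * (-b)
          else 0 := by
  simp only [JTheta]
  rw [rot13, jstd13 hn hev, rot02]

lemma JTheta_zero (hn : 4 ≤ n) (hev : Even n) (θ : ℝ → ℝ) (p : Fin n → ℝ) :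
    JTheta n hn θ p (0 : Fin n → ℝ) = 0 := by
  have h : (0 : Fin n → ℝ) = fun i : Fin n => if (i : ℕ) = 0 then (0:ℝ) else if (i : ℕ) = 2 then 0 else 0 := by
    funext i; split_ifs <;> rfl
  rw [h, JT02 hn hev θ p 0 0]
  funext i
  split_ifs <;> ring

lemma rot_rot' (hn : 4 ≤ n) (t : ℝ) (v : Fin n → ℝ) :
    rotMap n hn (-t) (rotMap n hn t v) = v := by
  have h := rot_rot hn (-t) v
  rwa [neg_neg] at h

lemma JTheta_sq (hn : 4 ≤ n) (hev : Even n) (θ : ℝ → ℝ) (p v : Fin n → ℝ) :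
    JTheta n hn θ p (JTheta n hn θ p v) = -v := by
  simp only [JTheta]
  rw [rot_rot hn, Jstd_Jstd hev, rot_neg_vec hn, rot_rot' hn]

lemma rot_isom (hn : 4 ≤ n) (t : ℝ) (v w : Fin n → ℝ) :
    ∑ i, rotMap n hn t v i * rotMap n hn t w i = ∑ i, v i * w i := by
  classical
  have hne : (⟨0, by omega⟩ : Fin n) ≠ ⟨2, by omega⟩ := by
    simp [Fin.ext_iff]
  have key : ∀ f : Fin n → ℝ, ∑ i, f i
      = (f ⟨0, by omega⟩ + f ⟨2, by omega⟩)
        + ∑ i ∈ ({⟨0, by omega⟩, ⟨2, by omega⟩} : Finset (Fin n))ᶜ, f i := by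
    intro f
    rw [← Finset.sum_add_sum_compl ({⟨0, by omega⟩, ⟨2, by omega⟩} : Finset (Fin n)) f,
      Finset.sum_pair hne]
  rw [key, key (fun i => v i * w i)]
  have h1 : ∀ i ∈ ({⟨0, by omega⟩, ⟨2, by omega⟩} : Finset (Fin n))ᶜ,
      rotMap n hn t v i * rotMap n hn t w i = v i * w i := by
    intro i hi
    simp only [Finset.mem_compl, Finset.mem_insert, Finset.mem_singleton] at hi
    push_neg at hi
    have h0 : ¬((i:ℕ) = 0) := fun h => hi.1 (Fin.ext h)
    have h2 : ¬((i:ℕ) = 2) := fun h => hi.2 (Fin.ext h)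
    simp [rotMap, h0, h2]
  rw [Finset.sum_congr rfl h1]
  have hv0 : rotMap n hn t v ⟨0, by omega⟩
      = Real.cos t * v ⟨0, by omega⟩ - Real.sin t * v ⟨2, by omega⟩ := by simp [rotMap]
  have hv2 : rotMap n hn t v ⟨2, by omega⟩
      = Real.sin t * v ⟨0, by omega⟩ + Real.cos t * v ⟨2, by omega⟩ := by simp [rotMap]
  have hw0 : rotMap n hn t w ⟨0, by omega⟩
      = Real.cos t * w ⟨0, by omega⟩ - Real.sin t * w ⟨2, by omega⟩ := by simp [rotMap]
  have hw2 : rotMap n hn t w ⟨2, by omega⟩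
      = Real.sin t * w ⟨0, by omega⟩ + Real.cos t * w ⟨2, by omega⟩ := by simp [rotMap]
  rw [hv0, hv2, hw0, hw2]
  have hsc := Real.sin_sq_add_cos_sq t
  linear_combination (v ⟨0, by omega⟩ * w ⟨0, by omega⟩ + v ⟨2, by omega⟩ * w ⟨2, by omega⟩) * hsc

def jswapFun (n : ℕ) : Fin n → Fin n := fun i =>
  if (i : ℕ) % 2 = 0 then ⟨((i : ℕ) + 1) % n, Nat.mod_lt _ i.pos⟩
  else ⟨(i : ℕ) - 1, lt_of_le_of_lt (Nat.sub_le _ _) i.isLt⟩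

lemma jswap_invol (hev : Even n) : Function.Involutive (jswapFun n) := by
  have hn2 : n % 2 = 0 := Nat.even_iff.mp hev
  intro i
  have hilt : (i : ℕ) < n := i.isLt
  by_cases h : (i : ℕ) % 2 = 0
  · have hlt : (i : ℕ) + 1 < n := by omega
    have h1 : ((i : ℕ) + 1) % n = (i : ℕ) + 1 := Nat.mod_eq_of_lt hlt
    have h2 : ¬(((i:ℕ) + 1) % n % 2 = 0) := by rw [h1]; omega
    simp only [jswapFun, h, if_true, h2, if_false]
    apply Fin.ext
    simp [h1]
  · have h2 : ((i:ℕ) - 1) % 2 = 0 := by omega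
    simp only [jswapFun, h, if_false, h2, if_true]
    apply Fin.ext
    simp only []
    show ((i:ℕ) - 1 + 1) % n = (i : ℕ)
    have : (i:ℕ) - 1 + 1 = (i:ℕ) := by omega
    rw [this, Nat.mod_eq_of_lt hilt]

lemma jstd_isom (hev : Even n) (v w : Fin n → ℝ) :
    ∑ i, Jstd n v i * Jstd n w i = ∑ i, v i * w i := by
  apply Fintype.sum_equiv ((jswap_invol (n := n) hev).toPerm)
  intro i
  by_cases h : (i : ℕ) % 2 = 0
  · simp only [Jstd, h, if_true, Function.Involutive.coe_toPerm, jswapFun]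
    ring
  · simp only [Jstd, h, if_false, Function.Involutive.coe_toPerm, jswapFun]

lemma JT_isom (hn : 4 ≤ n) (hev : Even n) (θ : ℝ → ℝ) (p v w : Fin n → ℝ) :
    ∑ i, JTheta n hn θ p v i * JTheta n hn θ p w i = ∑ i, v i * w i := by
  simp only [JTheta]
  rw [rot_isom hn, jstd_isom hev, rot_isom hn]


def Lmap (n : ℕ) (hn : 4 ≤ n) (c : ℝ) (k : ℕ) : (Fin n → ℝ) →L[ℝ] (Fin n → ℝ) :=
  ContinuousLinearMap.pi (fun i : Fin n =>
    if (i : ℕ) = k then c • ContinuousLinearMap.proj (⟨0, by omega⟩ : Fin n) else 0)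

lemma Lmap_apply (hn : 4 ≤ n) (c : ℝ) (k : ℕ) (u : Fin n → ℝ) :
    Lmap n hn c k u = fun i : Fin n => if (i : ℕ) = k then c * u ⟨0, by omega⟩ else 0 := by
  funext i
  simp only [Lmap, ContinuousLinearMap.pi_apply]
  split_ifs with h <;> simp

lemma hasFDeriv_JX (hn : 4 ≤ n) (θ : ℝ → ℝ) (hθ : ContDiff ℝ (⊤ : ℕ∞) θ) (hθ0 : θ 0 = 0) :
    HasFDerivAt (fun p : Fin n → ℝ => (fun i : Fin n =>
        if (i : ℕ) = 1 then Real.cos (θ (p ⟨0, by omega⟩))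
        else if (i : ℕ) = 3 then Real.sin (θ (p ⟨0, by omega⟩)) else 0))
      (Lmap n hn (deriv θ 0) 3) (0 : Fin n → ℝ) := by
  have hproj : HasFDerivAt (𝕜 := ℝ) (fun p : Fin n → ℝ => p ⟨0, by omega⟩)
      (ContinuousLinearMap.proj (⟨0, by omega⟩ : Fin n)) (0 : Fin n → ℝ) :=
    hasFDerivAt_apply (⟨0, by omega⟩ : Fin n) (0 : Fin n → ℝ)
  have hθat : HasDerivAt θ (deriv θ 0) 0 := ((hθ.differentiable (by simp)) 0).hasDerivAt
  have hcomp : HasFDerivAt (fun p : Fin n → ℝ => θ (p ⟨0, by omega⟩))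
      ((deriv θ 0) • ContinuousLinearMap.proj (⟨0, by omega⟩ : Fin n)) (0 : Fin n → ℝ) :=
    hθat.comp_hasFDerivAt_of_eq 0 hproj rfl
  have hcos : HasFDerivAt (fun p : Fin n → ℝ => Real.cos (θ (p ⟨0, by omega⟩)))
      ((-Real.sin (θ 0)) • ((deriv θ 0) • ContinuousLinearMap.proj (⟨0, by omega⟩ : Fin n)))
      (0 : Fin n → ℝ) :=
    (Real.hasDerivAt_cos (θ 0)).comp_hasFDerivAt_of_eq 0 hcomp rfl
  have hsin : HasFDerivAt (fun p : Fin n → ℝ => Real.sin (θ (p ⟨0, by omega⟩)))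
      ((Real.cos (θ 0)) • ((deriv θ 0) • ContinuousLinearMap.proj (⟨0, by omega⟩ : Fin n)))
      (0 : Fin n → ℝ) :=
    (Real.hasDerivAt_sin (θ 0)).comp_hasFDerivAt_of_eq 0 hcomp rfl
  apply hasFDerivAt_pi''
  intro i
  rw [Lmap, ContinuousLinearMap.proj_pi]
  by_cases h1 : (i : ℕ) = 1
  · have h3 : ¬((i : ℕ) = 3) := by omega
    rw [if_neg h3]
    have e : ((-Real.sin (θ 0)) • ((deriv θ 0) • ContinuousLinearMap.proj
        (⟨0, by omega⟩ : Fin n)) : (Fin n → ℝ) →L[ℝ] ℝ) = 0 := by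
      ext u; simp [hθ0]
    simp only [h1, if_pos rfl]
    rw [← e]
    exact hcos
  · by_cases h3 : (i : ℕ) = 3
    · rw [if_pos h3]
      have e : ((Real.cos (θ 0)) • ((deriv θ 0) • ContinuousLinearMap.proj
          (⟨0, by omega⟩ : Fin n)) : (Fin n → ℝ) →L[ℝ] ℝ)
          = (deriv θ 0) • ContinuousLinearMap.proj (⟨0, by omega⟩ : Fin n) := by
        ext u; simp [hθ0]
      simp only [h3, if_neg (by norm_num : ¬(3:ℕ) = 1), if_pos rfl]
      rw [← e]
      exact hsin
    · rw [if_neg h3]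
      simp only [if_neg h1, if_neg h3]
      exact hasFDerivAt_const 0 0

lemma hasFDeriv_JY (hn : 4 ≤ n) (θ : ℝ → ℝ) (hθ : ContDiff ℝ (⊤ : ℕ∞) θ) (hθ0 : θ 0 = 0) :
    HasFDerivAt (fun p : Fin n → ℝ => (fun i : Fin n =>
        if (i : ℕ) = 1 then -Real.sin (θ (p ⟨0, by omega⟩))
        else if (i : ℕ) = 3 then Real.cos (θ (p ⟨0, by omega⟩)) else 0))
      (Lmap n hn (-(deriv θ 0)) 1) (0 : Fin n → ℝ) := by
  have hproj : HasFDerivAt (𝕜 := ℝ) (fun p : Fin n → ℝ => p ⟨0, by omega⟩)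
      (ContinuousLinearMap.proj (⟨0, by omega⟩ : Fin n)) (0 : Fin n → ℝ) :=
    hasFDerivAt_apply (⟨0, by omega⟩ : Fin n) (0 : Fin n → ℝ)
  have hθat : HasDerivAt θ (deriv θ 0) 0 := ((hθ.differentiable (by simp)) 0).hasDerivAt
  have hcomp : HasFDerivAt (fun p : Fin n → ℝ => θ (p ⟨0, by omega⟩))
      ((deriv θ 0) • ContinuousLinearMap.proj (⟨0, by omega⟩ : Fin n)) (0 : Fin n → ℝ) :=
    hθat.comp_hasFDerivAt_of_eq 0 hproj rfl
  have hcos : HasFDerivAt (fun p : Fin n → ℝ => Real.cos (θ (p ⟨0, by omega⟩)))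
      ((-Real.sin (θ 0)) • ((deriv θ 0) • ContinuousLinearMap.proj (⟨0, by omega⟩ : Fin n)))
      (0 : Fin n → ℝ) :=
    (Real.hasDerivAt_cos (θ 0)).comp_hasFDerivAt_of_eq 0 hcomp rfl
  have hsin : HasFDerivAt (fun p : Fin n → ℝ => Real.sin (θ (p ⟨0, by omega⟩)))
      ((Real.cos (θ 0)) • ((deriv θ 0) • ContinuousLinearMap.proj (⟨0, by omega⟩ : Fin n)))
      (0 : Fin n → ℝ) :=
    (Real.hasDerivAt_sin (θ 0)).comp_hasFDerivAt_of_eq 0 hcomp rfl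
  apply hasFDerivAt_pi''
  intro i
  rw [Lmap, ContinuousLinearMap.proj_pi]
  by_cases h1 : (i : ℕ) = 1
  · rw [if_pos h1]
    have e : (-((Real.cos (θ 0)) • ((deriv θ 0) • ContinuousLinearMap.proj
        (⟨0, by omega⟩ : Fin n))) : (Fin n → ℝ) →L[ℝ] ℝ)
        = (-(deriv θ 0)) • ContinuousLinearMap.proj (⟨0, by omega⟩ : Fin n) := by
      ext u; simp [hθ0]
    simp only [h1, if_pos rfl]
    rw [← e]
    exact hsin.neg
  · by_cases h3 : (i : ℕ) = 3
    · rw [if_neg h1]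
      have e : ((-Real.sin (θ 0)) • ((deriv θ 0) • ContinuousLinearMap.proj
          (⟨0, by omega⟩ : Fin n)) : (Fin n → ℝ) →L[ℝ] ℝ) = 0 := by
        ext u; simp [hθ0]
      simp only [h3, if_neg (by norm_num : ¬(3:ℕ) = 1), if_pos rfl]
      rw [← e]
      exact hcos
    · rw [if_neg h1]
      simp only [if_neg h1, if_neg h3]
      exact hasFDerivAt_const 0 0

/-- On `ℝⁿ` (`n ≥ 4` even) with flat metric and twisting rotation
family `Θ(x₁)` with `θ(0)=0`, `θ'(0) ≠ 0`, the Nijenhuis tensor of `J^Θ` satisfies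
`N(∂_{x₁},∂_{x₃})(0) = θ'(0)∂_{x₁} ≠ 0`; moreover `J^Θ` is an almost complex
structure compatible with the flat metric. -/
theorem stmt18 (n : ℕ) (hn : 4 ≤ n) (hev : Even n)
    (θ : ℝ → ℝ) (hθ : ContDiff ℝ (⊤ : ℕ∞) θ) (hθ0 : θ 0 = 0) (hθ' : deriv θ 0 ≠ 0) :
    nijenhuis n hn θ (fun _ i => if (i : ℕ) = 0 then 1 else 0)
        (fun _ i => if (i : ℕ) = 2 then 1 else 0) 0
      = deriv θ 0 • (fun i : Fin n => if (i : ℕ) = 0 then (1 : ℝ) else 0) ∧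
    (deriv θ 0 • (fun i : Fin n => if (i : ℕ) = 0 then (1 : ℝ) else 0)) ≠ 0 ∧
    (∀ p v w : Fin n → ℝ,
      ∑ i, JTheta n hn θ p v i * JTheta n hn θ p w i = ∑ i, v i * w i) ∧
    (∀ p v, JTheta n hn θ p (JTheta n hn θ p v) = -v) := by
  refine ⟨?_, ?_, fun p v w => JT_isom hn hev θ p v w, fun p v => JTheta_sq hn hev θ p v⟩
  · -- the Nijenhuis computation
    have hX1 : (fun i : Fin n => if (i : ℕ) = 0 then (1:ℝ) else 0)
        = (fun i : Fin n => if (i : ℕ) = 0 then (1:ℝ) else if (i : ℕ) = 2 then 0 else 0) := by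
      funext i; split_ifs <;> rfl
    have hY1 : (fun i : Fin n => if (i : ℕ) = 2 then (1:ℝ) else 0)
        = (fun i : Fin n => if (i : ℕ) = 0 then (0:ℝ) else if (i : ℕ) = 2 then 1 else 0) := by
      funext i
      by_cases h0 : (i : ℕ) = 0
      · simp [h0]
      · simp [h0]
    have hJX : JThetaField n hn θ (fun _ i => if (i : ℕ) = 0 then 1 else 0)
        = fun p : Fin n → ℝ => (fun i : Fin n =>
            if (i : ℕ) = 1 then Real.cos (θ (p ⟨0, by omega⟩))
            else if (i : ℕ) = 3 then Real.sin (θ (p ⟨0, by omega⟩)) else 0) := by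
      funext p
      show JTheta n hn θ p (fun i : Fin n => if (i : ℕ) = 0 then 1 else 0) = _
      rw [hX1, JT02 hn hev θ p 1 0]
      funext i; split_ifs <;> ring
    have hJY : JThetaField n hn θ (fun _ i => if (i : ℕ) = 2 then 1 else 0)
        = fun p : Fin n → ℝ => (fun i : Fin n =>
            if (i : ℕ) = 1 then -Real.sin (θ (p ⟨0, by omega⟩))
            else if (i : ℕ) = 3 then Real.cos (θ (p ⟨0, by omega⟩)) else 0) := by
      funext p
      show JTheta n hn θ p (fun i : Fin n => if (i : ℕ) = 2 then 1 else 0) = _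
      rw [hY1, JT02 hn hev θ p 0 1]
      funext i; split_ifs <;> ring
    have hfX : fderiv ℝ (fun _ : Fin n → ℝ =>
        (fun i : Fin n => if (i : ℕ) = 0 then (1:ℝ) else 0)) 0 = 0 :=
      (hasFDerivAt_const _ _).fderiv
    have hfY : fderiv ℝ (fun _ : Fin n → ℝ =>
        (fun i : Fin n => if (i : ℕ) = 2 then (1:ℝ) else 0)) 0 = 0 :=
      (hasFDerivAt_const _ _).fderiv
    have hfJX := (hasFDeriv_JX hn θ hθ hθ0).fderiv
    have hfJY := (hasFDeriv_JY hn θ hθ hθ0).fderiv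
    have B1 : vfBracket n (fun _ i => if (i : ℕ) = 0 then (1:ℝ) else 0)
        (fun _ i => if (i : ℕ) = 2 then (1:ℝ) else 0) 0 = 0 := by
      simp only [vfBracket]
      rw [hfX, hfY]
      simp
    have B2 : vfBracket n
        (JThetaField n hn θ (fun _ i => if (i : ℕ) = 0 then 1 else 0))
        (fun _ i => if (i : ℕ) = 2 then (1:ℝ) else 0) 0 = 0 := by
      rw [hJX]
      simp only [vfBracket]
      rw [hfY, hfJX]
      funext i
      simp [Lmap_apply hn]
    have B3 : vfBracket n (fun _ i => if (i : ℕ) = 0 then (1:ℝ) else 0)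
        (JThetaField n hn θ (fun _ i => if (i : ℕ) = 2 then 1 else 0)) 0
        = (fun i : Fin n => if (i : ℕ) = 1 then -(deriv θ 0)
            else if (i : ℕ) = 3 then (0:ℝ) else 0) := by
      rw [hJY]
      simp only [vfBracket]
      rw [hfX, hfJY]
      funext i
      simp [Lmap_apply hn]
    have B4 : vfBracket n
        (JThetaField n hn θ (fun _ i => if (i : ℕ) = 0 then 1 else 0))
        (JThetaField n hn θ (fun _ i => if (i : ℕ) = 2 then 1 else 0)) 0 = 0 := by
      rw [hJX, hJY]
      simp only [vfBracket]
      rw [hfJX, hfJY]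
      funext i
      simp [Lmap_apply hn]
    simp only [nijenhuis, Pi.add_apply, Pi.sub_apply, JThetaField]
    rw [B1, B2, B3, B4]
    rw [JTheta_zero hn hev θ 0]
    rw [JT13 hn hev θ 0 (-(deriv θ 0)) 0]
    funext i
    have h00 : θ ((0 : Fin n → ℝ) ⟨0, by omega⟩) = 0 := by
      simp [hθ0]
    simp only [h00, hθ0, neg_zero, Real.cos_zero, Real.sin_zero, neg_neg, Pi.add_apply,
      Pi.sub_apply, Pi.zero_apply, Pi.smul_apply, smul_eq_mul]
    split_ifs <;> ring
  · intro h
    have h0 := congrFun h ⟨0, by omega⟩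
    simp [Pi.smul_apply] at h0
    exact hθ' h0

end
end
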